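/- arXiv:2406.07132 — 2 statements merged into one kernel-verified Lean document; each statement's English description precedes it below -/
import Mathlib

section
/- Let $G$ be a connected simple graph of order $n = 12$. If the signless Laplacian spectral radius satisfies $q(G) > 7 + 3\sqrt{5}$, then $G$ has a spanning tree with leaf degree at most $4$. -/
/-- The signless Laplacian matrix `Q(G) = D(G) + A(G)` of a simple graph, over `ℝ`. -/
noncomputable def signlessLap {V : Type*} [Fintype V] [DecidableEq V] (G : SimpleGraph V) :
    Matrix V V ℝ :=
  letI : DecidableRel G.Adj := Classical.decRel _
  G.degMatrix ℝ + G.adjMatrix ℝ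

/-- The signless Laplacian spectral radius `q(G)`: the largest eigenvalue of `Q(G)`. -/
noncomputable def qRadius {V : Type*} [Fintype V] [DecidableEq V] (G : SimpleGraph V) : ℝ :=
  sSup (spectrum ℝ (signlessLap G))

/-- `G` has a spanning tree whose leaf degree is at most `k`, i.e. a spanning tree `T`
in which every vertex is adjacent (in `T`) to at most `k` leaves of `T`. -/
def HasSpanningTreeWithLeafDegLE {V : Type*} (G : SimpleGraph V) (k : ℕ) : Prop :=
  ∃ T : SimpleGraph V, T ≤ G ∧ T.IsTree ∧
    ∀ v : V, {u : V | T.Adj v u ∧ (T.neighborSet u).ncard = 1}.ncard ≤ k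

/-- The join `G ∨ H` of two vertex-disjoint graphs: all edges between the two parts. -/
def SimpleGraph.graphJoin {α β : Type*} (G : SimpleGraph α) (H : SimpleGraph β) :
    SimpleGraph (α ⊕ β) where
  Adj x y :=
    match x, y with
    | Sum.inl a, Sum.inl b => G.Adj a b
    | Sum.inr a, Sum.inr b => H.Adj a b
    | Sum.inl _, Sum.inr _ => True
    | Sum.inr _, Sum.inl _ => True
  symm := by constructor; rintro (a | a) (b | b) h <;> first | trivial | exact G.adj_symm h | exact H.adj_symm h
  loopless := by constructor; rintro (a | a) h <;> first | exact G.irrefl h | exact H.irrefl h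

/-- The disjoint union `G ∪ H` of two vertex-disjoint graphs. -/
def SimpleGraph.graphDisjUnion {α β : Type*} (G : SimpleGraph α) (H : SimpleGraph β) :
    SimpleGraph (α ⊕ β) where
  Adj x y :=
    match x, y with
    | Sum.inl a, Sum.inl b => G.Adj a b
    | Sum.inr a, Sum.inr b => H.Adj a b
    | _, _ => False
  symm := by constructor; rintro (a | a) (b | b) h <;> first | trivial | exact G.adj_symm h | exact H.adj_symm h
  loopless := by constructor; rintro (a | a) h <;> first | exact G.irrefl h | exact H.irrefl h

/-!
Take a spanning tree `T` of `G` minimising the potential `∑ v, ld(v)²`, where `ld(v)` is the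
number of leaves of `T` adjacent to `v`. Moving a leaf `u` from its neighbour `s` (of degree at
least 3) to another `G`-neighbour `z` yields a spanning tree whose potential is at most
`2 (ld z - ld s) + 2` larger, so minimality gives `ld s ≤ ld z + 1`. If some `v` has
`ld v ≥ 5`, either all leaves at `v` are pendant in `G`, or a leaf at `v` sees a vertex `z` with
`ld z ≥ 4`; on 12 vertices, counting leaves then shows that every vertex other than `v, z` is
adjacent only to `v` and `z`. In either case a positive test vector `x` with
`Q x ≤ (7 + 3√5) x` bounds `q(G) ≤ 7 + 3√5`.
-/

open Finset Matrix

theorem Matrix.abs_le_of_mem_spectrum_of_vecMul_le {n : Type*} [Fintype n] [DecidableEq n]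
    {A : Matrix n n ℝ} (hA : ∀ i j, 0 ≤ A i j) {w : n → ℝ} (hw : ∀ i, 0 < w i) {c : ℝ}
    (hwA : ∀ j, (w ᵥ* A) j ≤ c * w j) {μ : ℝ} (hμ : μ ∈ spectrum ℝ A) : |μ| ≤ c := by
  rw [← Matrix.spectrum_toLin', ← Module.End.hasEigenvalue_iff_mem_spectrum] at hμ
  obtain ⟨x, hx⟩ := hμ.exists_hasEigenvector
  have hAx : A *ᵥ x = μ • x := by simpa using hx.apply_eq_smul
  set y : n → ℝ := fun i => |x i|
  have hy : ∀ i, |μ| * y i ≤ (A *ᵥ y) i := fun i =>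
    calc |μ| * y i = |(A *ᵥ x) i| := by rw [hAx, Pi.smul_apply, smul_eq_mul, abs_mul]
      _ ≤ ∑ j, |A i j * x j| := abs_sum_le_sum_abs _ _
      _ = (A *ᵥ y) i := by simp [mulVec, dotProduct, y, abs_mul, abs_of_nonneg (hA _ _)]
  have hpos : 0 < w ⬝ᵥ y := by
    obtain ⟨i, hi⟩ := Function.ne_iff.mp hx.2
    exact sum_pos' (fun j _ => mul_nonneg (hw j).le (abs_nonneg _))
      ⟨i, mem_univ i, mul_pos (hw i) (abs_pos.2 hi)⟩
  refine le_of_mul_le_mul_right ?_ hpos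
  calc |μ| * (w ⬝ᵥ y) = w ⬝ᵥ (|μ| • y) := by rw [dotProduct_smul, smul_eq_mul]
    _ ≤ w ⬝ᵥ (A *ᵥ y) := dotProduct_le_dotProduct_of_nonneg_left hy fun i => (hw i).le
    _ = (w ᵥ* A) ⬝ᵥ y := dotProduct_mulVec _ _ _
    _ ≤ (c • w) ⬝ᵥ y := dotProduct_le_dotProduct_of_nonneg_right hwA fun j => abs_nonneg _
    _ = c * (w ⬝ᵥ y) := by rw [smul_dotProduct, smul_eq_mul]

namespace SimpleGraph

variable {V : Type*}

section SignlessLaplacian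

variable [Fintype V] [DecidableEq V] (G : SimpleGraph V)

theorem signlessLap_eq_degMatrix_add_adjMatrix [DecidableRel G.Adj] :
    signlessLap G = G.degMatrix ℝ + G.adjMatrix ℝ := by
  unfold signlessLap
  congr!

theorem signlessLap_nonneg (i j : V) : 0 ≤ signlessLap G i j := by
  classical
  rw [signlessLap_eq_degMatrix_add_adjMatrix, Matrix.add_apply, degMatrix, diagonal_apply,
    adjMatrix_apply]
  positivity

theorem signlessLap_transpose : (signlessLap G)ᵀ = signlessLap G := by
  classical
  rw [signlessLap_eq_degMatrix_add_adjMatrix, transpose_add,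
    (isSymm_degMatrix (R := ℝ) (G := G)).eq, (isSymm_adjMatrix G).eq]

theorem signlessLap_mulVec_apply_le [DecidableRel G.Adj] {x : V → ℝ} (hx : ∀ u, 0 ≤ x u)
    {v : V} {S : Finset V} (hS : G.neighborSet v ⊆ S) :
    (signlessLap G *ᵥ x) v ≤ #S * x v + ∑ u ∈ S, x u := by
  have hS' : G.neighborFinset v ⊆ S := Set.toFinset_subset.mpr hS
  rw [signlessLap_eq_degMatrix_add_adjMatrix, add_mulVec, Pi.add_apply, degMatrix_mulVec_apply,
    adjMatrix_mulVec_apply, ← card_neighborFinset_eq_degree]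
  gcongr
  · exact hx v
  · exact fun u _ _ => hx u

theorem qRadius_le_of_mulVec_le {w : V → ℝ} (hw : ∀ i, 0 < w i) {c : ℝ} (hc : 0 ≤ c)
    (hQ : ∀ i, (signlessLap G *ᵥ w) i ≤ c * w i) : qRadius G ≤ c := by
  refine Real.sSup_le (fun μ hμ => (le_abs_self μ).trans ?_) hc
  refine abs_le_of_mem_spectrum_of_vecMul_le (signlessLap_nonneg G) hw (fun j => ?_) hμ
  rw [← signlessLap_transpose, vecMul_transpose]
  exact hQ j

theorem qRadius_le_of_forall_neighborSet_subset_singleton (hn : Fintype.card V = 12) {v : V}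
    {P : Finset V} (hP : #P = 5) (hvP : v ∉ P) (h : ∀ x ∈ P, G.neighborSet x ⊆ {v}) :
    qRadius G ≤ 7 + 3 * √5 := by
  classical
  have hc : (13.69 : ℝ) < 7 + 3 * √5 := by
    have : (2.23 : ℝ) < √5 := (Real.lt_sqrt (by norm_num)).mpr (by norm_num)
    linarith
  set M : Finset V := (insert v P)ᶜ
  have hM : #M = 6 := by rw [card_compl, card_insert_of_notMem hvP, hP, hn]
  -- An ad hoc test vector: every row inequality has slack once `√5 > 2.23`.
  let x : V → ℝ := fun y => if y = v then 1 else if y ∈ P then 2 / 25 else 19 / 50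
  have hxv : x v = 1 := if_pos rfl
  have hxP : ∀ y ∈ P, x y = 2 / 25 := fun y hy => by
    simp only [x, if_neg (show y ≠ v by rintro rfl; exact hvP hy), if_pos hy]
  have hxM : ∀ y ∈ M, x y = 19 / 50 := fun y hy => by
    obtain ⟨hyv, hyP⟩ : y ≠ v ∧ y ∉ P := by simpa [M, not_or] using hy
    simp only [x, if_neg hyv, if_neg hyP]
  have hxpos : ∀ y, 0 < x y := fun y => by dsimp only [x]; split_ifs <;> norm_num
  have hx : ∀ y, 0 ≤ x y := fun y => (hxpos y).le
  refine qRadius_le_of_mulVec_le G hxpos (by linarith) fun i => ?_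
  by_cases hiv : i = v
  · subst hiv
    have hPM : Disjoint P M :=
      Finset.disjoint_left.mpr fun y hy hyM => mem_compl.mp hyM (mem_insert_of_mem hy)
    calc (signlessLap G *ᵥ x) i ≤ #(P ∪ M) * x i + ∑ u ∈ P ∪ M, x u :=
          signlessLap_mulVec_apply_le G hx fun u hu => by
            have := G.ne_of_adj hu
            by_cases huP : u ∈ P <;> simp_all [M, eq_comm]
      _ = 11 + 134 / 50 := by
          rw [sum_union hPM, sum_eq_card_nsmul hxP, sum_eq_card_nsmul hxM,
            card_union_of_disjoint hPM, hP, hM, hxv]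
          norm_num
      _ ≤ (7 + 3 * √5) * x i := by rw [hxv]; linarith
  by_cases hiP : i ∈ P
  · calc (signlessLap G *ᵥ x) i ≤ #{v} * x i + ∑ u ∈ {v}, x u :=
          signlessLap_mulVec_apply_le G hx (by simpa using h i hiP)
      _ = 2 / 25 + 1 := by rw [card_singleton, sum_singleton, hxP i hiP, hxv]; norm_num
      _ ≤ (7 + 3 * √5) * x i := by rw [hxP i hiP]; linarith
  · have hiM : i ∈ M := by simp [M, hiv, hiP]
    have hvM : v ∉ M.erase i := by simp [M]
    calc (signlessLap G *ᵥ x) i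
          ≤ #(insert v (M.erase i)) * x i + ∑ u ∈ insert v (M.erase i), x u :=
          signlessLap_mulVec_apply_le G hx fun u hu => by
            have hui := (G.ne_of_adj hu).symm
            have huP : u ∈ P → False := fun huP =>
              hiv (by simpa using h u huP hu.symm)
            by_cases huv : u = v <;> simp_all [M]
      _ = 6 * (19 / 50) + (1 + 5 * (19 / 50)) := by
          rw [card_insert_of_notMem hvM, sum_insert hvM, card_erase_of_mem hiM, hM,
            sum_eq_card_nsmul fun y hy => hxM y (mem_of_mem_erase hy), card_erase_of_mem hiM, hM,
            hxv, hxM i hiM]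
          norm_num
      _ ≤ (7 + 3 * √5) * x i := by rw [hxM i hiM]; linarith

theorem qRadius_le_of_forall_neighborSet_subset_pair (hn : Fintype.card V = 12) {v w : V}
    (hvw : v ≠ w) (h : ∀ x, x ≠ v → x ≠ w → G.neighborSet x ⊆ {v, w}) :
    qRadius G ≤ 7 + 3 * √5 := by
  classical
  have h5 : √5 ^ 2 = 5 := Real.sq_sqrt (by norm_num)
  have h5' : 0 ≤ √5 := Real.sqrt_nonneg 5
  set α : ℝ := (5 + 3 * √5) / 2
  set C : Finset V := {v, w}
  -- The Perron vector of `K₂ ∨ 10 K₁`, for which every row inequality is an equality.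
  let x : V → ℝ := fun y => if y ∈ C then α else 1
  have hxC : ∀ y ∈ C, x y = α := fun y hy => if_pos hy
  have hxR : ∀ y ∈ Cᶜ, x y = 1 := fun y hy => if_neg (mem_compl.mp hy)
  have hxpos : ∀ y, 0 < x y := fun y => by dsimp only [x]; split <;> positivity
  have hsum : ∑ y, x y = 2 * α + 10 := by
    rw [← sum_add_sum_compl C, sum_eq_card_nsmul hxC, sum_eq_card_nsmul hxR, card_compl, hn,
      card_pair hvw]
    norm_num
  refine qRadius_le_of_mulVec_le G hxpos (by positivity) fun i => ?_
  by_cases hi : i ∈ C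
  · calc (signlessLap G *ᵥ x) i ≤ #(univ.erase i) * x i + ∑ u ∈ univ.erase i, x u :=
          signlessLap_mulVec_apply_le G (fun y => (hxpos y).le) fun u hu => by
            simpa using (G.ne_of_adj hu).symm
      _ = (7 + 3 * √5) * x i := by
          rw [card_erase_of_mem (mem_univ i), card_univ, hn, sum_erase_eq_sub (mem_univ i), hsum,
            hxC i hi]
          push_cast
          linear_combination (-9 / 2 : ℝ) * h5
  · have hiv : i ≠ v := fun h' => hi (h' ▸ mem_insert_self v {w})
    have hiw : i ≠ w := fun h' => hi (h' ▸ mem_insert_of_mem (mem_singleton_self w))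
    calc (signlessLap G *ᵥ x) i ≤ #C * x i + ∑ u ∈ C, x u :=
          signlessLap_mulVec_apply_le G (fun y => (hxpos y).le) (by simpa [C] using h i hiv hiw)
      _ = (7 + 3 * √5) * x i := by
          rw [sum_eq_card_nsmul hxC, card_pair hvw, hxR i (mem_compl.mpr hi)]
          ring

end SignlessLaplacian

theorem adj_iff_eq_of_degree_eq_one {T : SimpleGraph V} {u s : V} [Fintype (T.neighborSet u)]
    (hu : T.degree u = 1) (hus : T.Adj u s) {y : V} : T.Adj u y ↔ y = s :=
  ⟨fun hy => (degree_eq_one_iff_existsUnique_adj.mp hu).unique hy hus, fun h => h ▸ hus⟩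

section LeafDegree

variable [Fintype V]

open scoped Classical

variable (T : SimpleGraph V)

noncomputable def leafNbrs (v : V) : Finset V := {u ∈ T.neighborFinset v | T.degree u = 1}

noncomputable def leafDeg (v : V) : ℕ := #(T.leafNbrs v)

noncomputable def leafPotential : ℕ := ∑ v, T.leafDeg v ^ 2

variable {T}

theorem mem_leafNbrs {u v : V} : u ∈ T.leafNbrs v ↔ T.Adj v u ∧ T.degree u = 1 := by
  simp [leafNbrs]

theorem ncard_setOf_adj_and_ncard_neighborSet_eq_one (v : V) :
    {u | T.Adj v u ∧ (T.neighborSet u).ncard = 1}.ncard = T.leafDeg v := by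
  rw [leafDeg, ← Set.ncard_coe_finset]
  congr 1
  ext u
  rw [Set.mem_ofPred_eq, Set.ncard_eq_toFinset_card', ← neighborFinset_def,
    card_neighborFinset_eq_degree, mem_coe, mem_leafNbrs]

theorem leafDeg_le_degree (v : V) : T.leafDeg v ≤ T.degree v := by
  rw [← card_neighborFinset_eq_degree]
  exact card_filter_le _ _

theorem eq_of_mem_leafNbrs {u v w : V} (hv : u ∈ T.leafNbrs v) (hw : u ∈ T.leafNbrs w) :
    v = w := by
  rw [mem_leafNbrs] at hv hw
  exact ((adj_iff_eq_of_degree_eq_one hv.2 hv.1.symm).mp hw.1.symm).symm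

theorem card_biUnion_insert_leafNbrs [DecidableEq V] {S : Finset V}
    (hS : ∀ x ∈ S, T.degree x ≠ 1) :
    #(S.biUnion fun x => insert x (T.leafNbrs x)) = ∑ x ∈ S, (T.leafDeg x + 1) := by
  rw [card_biUnion]
  · refine sum_congr rfl fun x _ => card_insert_of_notMem fun hx => ?_
    exact T.loopless.irrefl x (mem_leafNbrs.mp hx).1
  · intro x hx y hy hxy
    refine Finset.disjoint_left.mpr fun a hax hay => ?_
    rw [mem_insert] at hax hay
    rcases hax with rfl | hax <;> rcases hay with rfl | hay
    · exact hxy rfl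
    · exact hS a hx (mem_leafNbrs.mp hay).2
    · exact hS a hy (mem_leafNbrs.mp hax).2
    · exact hxy (eq_of_mem_leafNbrs hax hay)

theorem degree_ne_one_of_two_le_leafDeg {v : V} (hv : 2 ≤ T.leafDeg v) : T.degree v ≠ 1 := by
  have := T.leafDeg_le_degree v
  omega

theorem eq_of_le_leafDeg [DecidableEq V] {k : ℕ} (hk : 3 ≤ k) (hn : Fintype.card V ≤ 2 * k + 4)
    {v y z : V} (hv : k < T.leafDeg v) (hz : k ≤ T.leafDeg z) (hy : k - 1 ≤ T.leafDeg y)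
    (hzv : z ≠ v) (hyv : y ≠ v) : y = z := by
  by_contra hyz
  have hS : ∀ x ∈ ({v, z, y} : Finset V), T.degree x ≠ 1 := by
    simp only [mem_insert, mem_singleton]
    rintro x (rfl | rfl | rfl) <;> exact degree_ne_one_of_two_le_leafDeg (by omega)
  have := (card_biUnion_insert_leafNbrs hS).symm.trans_le (card_le_univ _)
  rw [sum_insert (by simp [hzv.symm, hyv.symm]), sum_pair (Ne.symm hyz)] at this
  omega

end LeafDegree

section MoveLeaf

def moveLeaf (T : SimpleGraph V) (u s z : V) : SimpleGraph V :=
  T.deleteEdges {s(u, s)} ⊔ edge u z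

variable {T : SimpleGraph V} {u s z : V}

theorem moveLeaf_adj_of_ne {x y : V} (hx : x ≠ u) (hy : y ≠ u) :
    (T.moveLeaf u s z).Adj x y ↔ T.Adj x y := by
  simp [moveLeaf, edge_adj, hx, hy]

theorem moveLeaf_adj_left [Fintype (T.neighborSet u)] (hu : T.degree u = 1) (hus : T.Adj u s)
    (huz : u ≠ z) {y : V} : (T.moveLeaf u s z).Adj u y ↔ y = z := by
  have hs : ∀ y, T.Adj u y → y = s := fun y => (adj_iff_eq_of_degree_eq_one hu hus).mp
  simp only [moveLeaf, sup_adj, deleteEdges_adj, edge_adj, Set.mem_singleton_iff, Sym2.eq_iff]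
  grind

theorem moveLeaf_le {G : SimpleGraph V} (hTG : T ≤ G) (hz : G.Adj u z) :
    T.moveLeaf u s z ≤ G :=
  sup_le ((deleteEdges_le _).trans hTG) ((edge_le_iff G).mpr (Or.inr hz))

theorem IsTree.moveLeaf [Finite V] [Fintype (T.neighborSet u)] (hT : T.IsTree)
    (hu : T.degree u = 1) (hus : T.Adj u s) (huz : u ≠ z) (hzs : z ≠ s) :
    (T.moveLeaf u s z).IsTree := by
  rw [isTree_iff_connected_and_card]
  constructor
  · have hconn := hT.connected.induce_compl_singleton_of_degree_eq_one hu
    let f : T.induce {u}ᶜ →g T.moveLeaf u s z :=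
      ⟨Subtype.val, fun {a b} h => (moveLeaf_adj_of_ne a.2 b.2).mpr h⟩
    refine (connected_iff_exists_forall_reachable _).mpr ⟨z, fun y => ?_⟩
    by_cases hy : y = u
    · exact hy ▸ ((moveLeaf_adj_left hu hus huz).mpr rfl).reachable.symm
    · exact (hconn.preconnected ⟨z, huz.symm⟩ ⟨y, hy⟩).map f
  · have hus' : s(u, s) ∈ T.edgeSet := hus
    have huz' : s(u, z) ∉ T.edgeSet \ {s(u, s)} := fun h =>
      hzs ((adj_iff_eq_of_degree_eq_one hu hus).mp h.1)
    have hE : (T.moveLeaf u s z).edgeSet = insert s(u, z) (T.edgeSet \ {s(u, s)}) := by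
      rw [SimpleGraph.moveLeaf, edgeSet_sup, edgeSet_deleteEdges, edgeSet_edge_of_ne huz,
        Set.union_singleton]
    rw [← (isTree_iff_connected_and_card.mp hT).2, Nat.card_coe_set_eq, Nat.card_coe_set_eq, hE,
      Set.ncard_insert_of_notMem huz', Set.ncard_sdiff_singleton_add_one hus']

end MoveLeaf

section MoveLeafDegree

variable [Fintype V] [DecidableEq V]

open scoped Classical

variable {T : SimpleGraph V} {u s z : V}

theorem neighborFinset_moveLeaf_of_ne (hu : T.degree u = 1) (hus : T.Adj u s) (huz : u ≠ z)
    {y : V} (hyu : y ≠ u) (hys : y ≠ s) (hyz : y ≠ z) :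
    (T.moveLeaf u s z).neighborFinset y = T.neighborFinset y := by
  ext w
  rw [mem_neighborFinset, mem_neighborFinset]
  by_cases hw : w = u
  · subst hw
    rw [adj_comm, moveLeaf_adj_left hu hus huz, adj_comm, adj_iff_eq_of_degree_eq_one hu hus]
    exact iff_of_false hyz hys
  · exact moveLeaf_adj_of_ne hyu hw

theorem neighborFinset_moveLeaf_source (hu : T.degree u = 1) (hus : T.Adj u s) (huz : u ≠ z)
    (hzs : z ≠ s) : (T.moveLeaf u s z).neighborFinset s = (T.neighborFinset s).erase u := by
  ext w
  rw [mem_neighborFinset, mem_erase, mem_neighborFinset]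
  by_cases hw : w = u
  · subst hw
    rw [adj_comm, moveLeaf_adj_left hu hus huz]
    exact iff_of_false hzs.symm fun h => h.1 rfl
  · rw [moveLeaf_adj_of_ne hus.ne.symm hw]
    exact ⟨fun h => ⟨hw, h⟩, And.right⟩

theorem neighborFinset_moveLeaf_target (hu : T.degree u = 1) (hus : T.Adj u s) (huz : u ≠ z) :
    (T.moveLeaf u s z).neighborFinset z = insert u (T.neighborFinset z) := by
  ext w
  rw [mem_neighborFinset, mem_insert, mem_neighborFinset]
  by_cases hw : w = u
  · subst hw
    rw [adj_comm, moveLeaf_adj_left hu hus huz]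
    exact iff_of_true rfl (Or.inl rfl)
  · rw [moveLeaf_adj_of_ne huz.symm hw]
    exact ⟨Or.inr, fun h => h.resolve_left hw⟩

theorem degree_moveLeaf_source (hu : T.degree u = 1) (hus : T.Adj u s) (huz : u ≠ z)
    (hzs : z ≠ s) : (T.moveLeaf u s z).degree s + 1 = T.degree s := by
  rw [← card_neighborFinset_eq_degree, neighborFinset_moveLeaf_source hu hus huz hzs,
    card_erase_add_one ((T.mem_neighborFinset s u).mpr hus.symm), card_neighborFinset_eq_degree]

theorem degree_moveLeaf_target (hu : T.degree u = 1) (hus : T.Adj u s) (huz : u ≠ z)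
    (hzs : z ≠ s) : (T.moveLeaf u s z).degree z = T.degree z + 1 := by
  have hzu : u ∉ T.neighborFinset z := by
    rw [mem_neighborFinset, adj_comm, adj_iff_eq_of_degree_eq_one hu hus]
    exact hzs
  rw [← card_neighborFinset_eq_degree, neighborFinset_moveLeaf_target hu hus huz,
    card_insert_of_notMem hzu, card_neighborFinset_eq_degree]

theorem degree_eq_one_of_degree_moveLeaf_eq_one (hu : T.degree u = 1) (hus : T.Adj u s)
    (huz : u ≠ z) (hzs : z ≠ s) (hs : 3 ≤ T.degree s) (hz : 0 < T.degree z) {y : V}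
    (hy : (T.moveLeaf u s z).degree y = 1) : T.degree y = 1 := by
  by_cases hyu : y = u
  · exact hyu ▸ hu
  by_cases hys : y = s
  · have := degree_moveLeaf_source hu hus huz hzs
    subst hys
    omega
  by_cases hyz : y = z
  · have := degree_moveLeaf_target hu hus huz hzs
    subst hyz
    omega
  rwa [← card_neighborFinset_eq_degree, neighborFinset_moveLeaf_of_ne hu hus huz hyu hys hyz,
    card_neighborFinset_eq_degree] at hy

theorem leafNbrs_moveLeaf_subset (hu : T.degree u = 1) (hus : T.Adj u s) (huz : u ≠ z)
    (hzs : z ≠ s) (hs : 3 ≤ T.degree s) (hz : 0 < T.degree z) (x : V) :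
    (T.moveLeaf u s z).leafNbrs x ⊆
      {w ∈ (T.moveLeaf u s z).neighborFinset x | T.degree w = 1} := fun w hw => by
  rw [leafNbrs, mem_filter] at hw
  exact mem_filter.mpr ⟨hw.1, degree_eq_one_of_degree_moveLeaf_eq_one hu hus huz hzs hs hz hw.2⟩

theorem leafDeg_moveLeaf_source_add_one_le (hu : T.degree u = 1) (hus : T.Adj u s)
    (huz : u ≠ z) (hzs : z ≠ s) (hs : 3 ≤ T.degree s) (hz : 0 < T.degree z) :
    (T.moveLeaf u s z).leafDeg s + 1 ≤ T.leafDeg s := by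
  have hmem : u ∈ T.leafNbrs s := mem_leafNbrs.mpr ⟨hus.symm, hu⟩
  have := card_le_card (leafNbrs_moveLeaf_subset hu hus huz hzs hs hz s)
  rw [neighborFinset_moveLeaf_source hu hus huz hzs, filter_erase, ← leafNbrs,
    card_erase_of_mem hmem] at this
  exact Nat.add_le_of_le_sub (card_pos.mpr ⟨u, hmem⟩) this

theorem leafDeg_moveLeaf_target_le (hu : T.degree u = 1) (hus : T.Adj u s) (huz : u ≠ z)
    (hzs : z ≠ s) (hs : 3 ≤ T.degree s) (hz : 0 < T.degree z) :
    (T.moveLeaf u s z).leafDeg z ≤ T.leafDeg z + 1 := by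
  refine (card_le_card ((leafNbrs_moveLeaf_subset hu hus huz hzs hs hz z).trans ?_)).trans
    (card_insert_le u _)
  rw [neighborFinset_moveLeaf_target hu hus huz, filter_insert, if_pos hu]
  rfl

theorem leafDeg_moveLeaf_le_of_ne (hu : T.degree u = 1) (hus : T.Adj u s) (huz : u ≠ z)
    (hzs : z ≠ s) (hs : 3 ≤ T.degree s) (hz : 0 < T.degree z) {x : V} (hxs : x ≠ s)
    (hxz : x ≠ z) : (T.moveLeaf u s z).leafDeg x ≤ T.leafDeg x := by
  by_cases hxu : x = u
  · subst hxu
    suffices (T.moveLeaf x s z).leafNbrs x = ∅ by simp [leafDeg, this]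
    refine eq_empty_of_forall_notMem fun w hw => ?_
    rw [mem_leafNbrs, moveLeaf_adj_left hu hus huz] at hw
    obtain ⟨rfl, hw⟩ := hw
    have := degree_moveLeaf_target hu hus huz hzs
    omega
  · refine card_le_card ((leafNbrs_moveLeaf_subset hu hus huz hzs hs hz x).trans ?_)
    rw [neighborFinset_moveLeaf_of_ne hu hus huz hxu hxs hxz]
    rfl

theorem leafPotential_moveLeaf_add_le (hu : T.degree u = 1) (hus : T.Adj u s) (huz : u ≠ z)
    (hzs : z ≠ s) (hs : 3 ≤ T.degree s) (hz : 0 < T.degree z) :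
    (T.moveLeaf u s z).leafPotential + 2 * T.leafDeg s ≤
      T.leafPotential + 2 * T.leafDeg z + 2 := by
  have hS := leafDeg_moveLeaf_source_add_one_le hu hus huz hzs hs hz
  have hZ := leafDeg_moveLeaf_target_le hu hus huz hzs hs hz
  have hzs' : z ∈ univ.erase s := mem_erase.mpr ⟨hzs, mem_univ z⟩
  have hrest : ∑ x ∈ (univ.erase s).erase z, (T.moveLeaf u s z).leafDeg x ^ 2 ≤
      ∑ x ∈ (univ.erase s).erase z, T.leafDeg x ^ 2 := sum_le_sum fun x hx => by
    obtain ⟨hxz, hxs⟩ := by simpa using hx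
    exact Nat.pow_le_pow_left (leafDeg_moveLeaf_le_of_ne hu hus huz hzs hs hz hxs hxz) 2
  simp only [leafPotential]
  rw [← add_sum_erase _ _ (mem_univ s), ← add_sum_erase _ _ hzs', ← add_sum_erase _ _ (mem_univ s),
    ← add_sum_erase _ _ hzs']
  nlinarith

end MoveLeafDegree

section MinimalTree

variable [Fintype V]

open scoped Classical

structure IsLeafPotentialMinSpanningTree (G T : SimpleGraph V) : Prop where
  le : T ≤ G
  isTree : T.IsTree
  leafPotential_le : ∀ T' ≤ G, T'.IsTree → T.leafPotential ≤ T'.leafPotential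

variable {G T : SimpleGraph V}

theorem Connected.exists_isLeafPotentialMinSpanningTree (hG : G.Connected) :
    ∃ T, G.IsLeafPotentialMinSpanningTree T := by
  obtain ⟨T, ⟨hTG, hT⟩, hmin⟩ := Set.exists_min_image {T | T ≤ G ∧ T.IsTree} leafPotential
    (Set.toFinite _) (hG.exists_isTree_le.imp fun _ h => h)
  exact ⟨T, hTG, hT, fun T' hT'G hT' => hmin T' ⟨hT'G, hT'⟩⟩

theorem IsLeafPotentialMinSpanningTree.leafDeg_le_leafDeg_add_one
    (hT : G.IsLeafPotentialMinSpanningTree T) {u s z : V} (hu : T.degree u = 1) (hus : T.Adj u s)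
    (hs : 3 ≤ T.degree s) (hz : G.Adj u z) (hzs : z ≠ s) :
    T.leafDeg s ≤ T.leafDeg z + 1 := by
  have : Nontrivial V := ⟨u, s, hus.ne⟩
  have h₁ := hT.leafPotential_le _ (moveLeaf_le hT.le hz) (hT.isTree.moveLeaf hu hus hz.ne hzs)
  have h₂ := leafPotential_moveLeaf_add_le hu hus hz.ne hzs hs
    (hT.isTree.connected.preconnected.degree_pos_of_nontrivial z)
  omega

theorem IsLeafPotentialMinSpanningTree.neighborSet_subset_pair_of_mem_leafNbrs
    (hT : G.IsLeafPotentialMinSpanningTree T) {k : ℕ} (hk : 3 ≤ k)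
    (hn : Fintype.card V ≤ 2 * k + 4) {v z : V} (hv : k < T.leafDeg v) (hz : k ≤ T.leafDeg z)
    (hzv : z ≠ v) {s ℓ : V} (hs : s = v ∨ s = z) (hℓ : ℓ ∈ T.leafNbrs s) :
    G.neighborSet ℓ ⊆ {v, z} := by
  intro y hy
  have hks : k ≤ T.leafDeg s := by rcases hs with rfl | rfl <;> omega
  by_cases hys : y = s
  · rcases hs with rfl | rfl <;> simp [hys]
  have hℓ' := mem_leafNbrs.mp hℓ
  have := hT.leafDeg_le_leafDeg_add_one hℓ'.2 hℓ'.1.symm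
    (by linarith [T.leafDeg_le_degree s]) hy hys
  by_cases hyv : y = v
  · simp [hyv]
  · simp [eq_of_le_leafDeg hk hn hv hz (by omega) hzv hyv]

theorem IsLeafPotentialMinSpanningTree.forall_neighborSet_subset_pair
    (hT : G.IsLeafPotentialMinSpanningTree T) {k : ℕ} (hk : 3 ≤ k)
    (hn : Fintype.card V ≤ 2 * k + 4) {v : V} (hv : k < T.leafDeg v) {u z : V}
    (hu : u ∈ T.leafNbrs v) (huz : G.Adj u z) (hzv : z ≠ v) :
    ∀ x, x ≠ v → x ≠ z → G.neighborSet x ⊆ {v, z} := by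
  have hz : k ≤ T.leafDeg z := by
    have hu' := mem_leafNbrs.mp hu
    have := hT.leafDeg_le_leafDeg_add_one hu'.2 hu'.1.symm
      (by linarith [T.leafDeg_le_degree v]) huz hzv
    omega
  set B := ({v, z} : Finset V).biUnion fun x => insert x (T.leafNbrs x)
  have hleaf : ∀ ℓ ∈ B, ℓ ≠ v → ℓ ≠ z → G.neighborSet ℓ ⊆ {v, z} := fun ℓ hℓ hℓv hℓz => by
    obtain ⟨s, hs, hℓs⟩ := mem_biUnion.mp hℓ
    have hs : s = v ∨ s = z := by simpa using hs
    refine hT.neighborSet_subset_pair_of_mem_leafNbrs hk hn hv hz hzv hs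
      ((mem_insert.mp hℓs).resolve_left ?_)
    rcases hs with rfl | rfl <;> assumption
  have hBc : #Bᶜ ≤ 1 := by
    have hS : ∀ x ∈ ({v, z} : Finset V), T.degree x ≠ 1 := by
      simp only [mem_insert, mem_singleton]
      rintro x (rfl | rfl) <;> exact degree_ne_one_of_two_le_leafDeg (by omega)
    have : #B = _ := card_biUnion_insert_leafNbrs hS
    rw [sum_pair hzv.symm] at this
    rw [card_compl]
    omega
  intro x hxv hxz y hxy
  by_cases hxB : x ∈ B
  · exact hleaf x hxB hxv hxz hxy
  by_contra hy
  have hyv : y ≠ v := by rintro rfl; simp at hy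
  have hyz : y ≠ z := by rintro rfl; simp at hy
  by_cases hyB : y ∈ B
  · exact hy (by simpa [hxv, hxz] using hleaf y hyB hyv hyz hxy.symm)
  · exact G.ne_of_adj hxy (card_le_one.mp hBc x (mem_compl.mpr hxB) y (mem_compl.mpr hyB))

theorem Connected.hasSpanningTreeWithLeafDegLE_or (hG : G.Connected) {k : ℕ} (hk : 3 ≤ k)
    (hn : Fintype.card V ≤ 2 * k + 4) :
    HasSpanningTreeWithLeafDegLE G k ∨
      (∃ v, ∃ P : Finset V, #P = k + 1 ∧ v ∉ P ∧ ∀ x ∈ P, G.neighborSet x ⊆ {v}) ∨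
      ∃ v w, v ≠ w ∧ ∀ x, x ≠ v → x ≠ w → G.neighborSet x ⊆ {v, w} := by
  classical
  obtain ⟨T, hT⟩ := hG.exists_isLeafPotentialMinSpanningTree
  by_cases hleaf : ∀ v, T.leafDeg v ≤ k
  · exact Or.inl ⟨T, hT.le, hT.isTree, fun v =>
      (ncard_setOf_adj_and_ncard_neighborSet_eq_one v).trans_le (hleaf v)⟩
  obtain ⟨v, hv⟩ : ∃ v, k < T.leafDeg v := by simpa using hleaf
  by_cases hpend : ∀ u ∈ T.leafNbrs v, G.neighborSet u ⊆ {v}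
  · obtain ⟨P, hPv, hP⟩ := exists_subset_card_eq (s := T.leafNbrs v) hv
    exact Or.inr <| Or.inl ⟨v, P, hP, fun hvP => T.loopless.irrefl v (mem_leafNbrs.mp (hPv hvP)).1,
      fun u hu => hpend u (hPv hu)⟩
  · obtain ⟨u, hu, z, huz, hzv⟩ : ∃ u ∈ T.leafNbrs v, ∃ z, G.Adj u z ∧ z ≠ v := by
      simpa [Set.subset_def] using hpend
    exact Or.inr <| Or.inr
      ⟨v, z, Ne.symm hzv, hT.forall_neighborSet_subset_pair hk hn hv hu huz hzv⟩

end MinimalTree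

end SimpleGraph

/-- Theorem 1.1: a connected graph of order 12 with `q(G) > 7 + 3 * Real.sqrt 5` has a
spanning tree with leaf degree at most 4. -/
theorem signlessLap_spectral_radius_spanning_tree_leaf_degree_of_card_12
    {V : Type*} [Fintype V] [DecidableEq V] (G : SimpleGraph V)
    (hn : Fintype.card V = 12) (hG : G.Connected)
    (hq : 7 + 3 * Real.sqrt 5 < qRadius G) :
    HasSpanningTreeWithLeafDegLE G 4 := by
  rcases hG.hasSpanningTreeWithLeafDegLE_or (k := 4) (by norm_num) (by omega) with
    h | ⟨v, P, hP, hvP, hPv⟩ | ⟨v, w, hvw, hvw'⟩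
  · exact h
  · linarith [G.qRadius_le_of_forall_neighborSet_subset_singleton hn hP hvP hPv]
  · linarith [G.qRadius_le_of_forall_neighborSet_subset_pair hn hvw hvw']
end

section
/- Let $k$ and $s$ be positive integers. The signless Laplacian spectral radius of the graph $K_s \vee ((k+1)s+1)K_1$ equals $\frac{(k+4)s-1+\sqrt{(k^{2}+8k+8)s^{2}-2ks+1}}{2}$. -/
/-! Let `Q` be the signless Laplacian of `K_s ∨ t K₁` and let `A`, `B` be the sums of an
eigenvector over the clique and over the independent set. Summing the eigenvalue equations
over each part gives `μ A = (2s + t - 2) A + s B` and `μ B = t A + s B`, the eigen-equations of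
the quotient matrix `[[2s+t-2, t], [s, s]]`. So either `A ≠ 0` and `μ` is a root of
`μ² - (3s + t - 2) μ + 2s(s - 1)`, or `A = B = 0` and `μ ∈ {s, s + t - 2}`, where this
quadratic is nonpositive. Hence every eigenvalue is at most its larger root `r`, and `r` is
attained by the vector equal to `r - s` on the clique and `s` on the independent set. -/

open Matrix

theorem Matrix.mem_spectrum_iff_exists_mulVec_eq_smul {n : Type*} [Fintype n] [DecidableEq n]
    {A : Matrix n n ℝ} {μ : ℝ} :
    μ ∈ spectrum ℝ A ↔ ∃ v : n → ℝ, v ≠ 0 ∧ A *ᵥ v = μ • v := by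
  rw [← Matrix.spectrum_toLin', ← Module.End.hasEigenvalue_iff_mem_spectrum,
    Module.End.hasEigenvalue_iff, Submodule.ne_bot_iff]
  simp only [Module.End.mem_eigenspace_iff, Matrix.toLin'_apply]
  exact ⟨fun ⟨v, hv, hv0⟩ => ⟨v, hv0, hv⟩, fun ⟨v, hv0, hv⟩ => ⟨v, hv, hv0⟩⟩

theorem signlessLap_mulVec_apply {V : Type*} [Fintype V] [DecidableEq V] (G : SimpleGraph V)
    [DecidableRel G.Adj] (v : V → ℝ) (x : V) :
    (signlessLap G *ᵥ v) x = G.degree x * v x + ∑ y ∈ G.neighborFinset x, v y := by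
  obtain rfl : ‹DecidableRel G.Adj› = Classical.decRel G.Adj := Subsingleton.elim _ _
  simp only [signlessLap, Matrix.add_mulVec, Pi.add_apply,
    SimpleGraph.degMatrix_mulVec_apply, SimpleGraph.adjMatrix_mulVec_apply]

namespace SimpleGraph

variable {α β : Type*} {G : SimpleGraph α} {H : SimpleGraph β} {a a' : α} {b b' : β}

@[simp] theorem graphJoin_adj_inl_inl : (G.graphJoin H).Adj (.inl a) (.inl a') ↔ G.Adj a a' :=
  Iff.rfl

@[simp] theorem graphJoin_adj_inr_inr : (G.graphJoin H).Adj (.inr b) (.inr b') ↔ H.Adj b b' :=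
  Iff.rfl

@[simp] theorem graphJoin_adj_inl_inr : (G.graphJoin H).Adj (.inl a) (.inr b) := trivial

@[simp] theorem graphJoin_adj_inr_inl : (G.graphJoin H).Adj (.inr b) (.inl a) := trivial

end SimpleGraph

section TopJoinBot

variable {α β : Type*} [Fintype α] [Fintype β] [DecidableEq α] [DecidableEq β]

theorem signlessLap_top_graphJoin_bot_mulVec_inl (v : α ⊕ β → ℝ) (a : α) :
    (signlessLap ((⊤ : SimpleGraph α).graphJoin (⊥ : SimpleGraph β)) *ᵥ v) (.inl a) =
      (Fintype.card α + Fintype.card β - 2) * v (.inl a) + ∑ x, v x := by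
  classical
  have hN : ((⊤ : SimpleGraph α).graphJoin (⊥ : SimpleGraph β)).neighborFinset (.inl a) =
      Finset.univ.erase (.inl a) := by
    ext (a' | b) <;> simp [eq_comm]
  rw [signlessLap_mulVec_apply, ← SimpleGraph.card_neighborFinset_eq_degree, hN,
    Finset.card_erase_of_mem (Finset.mem_univ _), Finset.sum_erase_eq_sub (Finset.mem_univ _),
    Finset.card_univ, Fintype.card_sum,
    Nat.cast_sub (Nat.le_add_right_of_le (Fintype.card_pos_iff.2 ⟨a⟩))]
  push_cast
  ring

theorem signlessLap_top_graphJoin_bot_mulVec_inr (v : α ⊕ β → ℝ) (b : β) :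
    (signlessLap ((⊤ : SimpleGraph α).graphJoin (⊥ : SimpleGraph β)) *ᵥ v) (.inr b) =
      Fintype.card α * v (.inr b) + ∑ a, v (.inl a) := by
  classical
  have hN : ((⊤ : SimpleGraph α).graphJoin (⊥ : SimpleGraph β)).neighborFinset (.inr b) =
      Finset.univ.map .inl := by
    ext (a | b') <;> simp
  rw [signlessLap_mulVec_apply, ← SimpleGraph.card_neighborFinset_eq_degree, hN,
    Finset.card_map, Finset.card_univ, Finset.sum_map]
  rfl

end TopJoinBot

/-- The larger root of the monic quadratic `x ^ 2 - b * x + c`. -/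
noncomputable def largerRoot (b c : ℝ) : ℝ := (b + √(b ^ 2 - 4 * c)) / 2

theorem le_largerRoot_of_nonpos {b c x : ℝ} (h : x ^ 2 - b * x + c ≤ 0) :
    x ≤ largerRoot b c := by
  have hsq : (2 * x - b) ^ 2 ≤ b ^ 2 - 4 * c := by nlinarith
  have := (le_abs_self _).trans (Real.abs_le_sqrt hsq)
  rw [largerRoot]
  linarith

theorem largerRoot_isRoot {b c : ℝ} (h : 0 ≤ b ^ 2 - 4 * c) :
    largerRoot b c ^ 2 - b * largerRoot b c + c = 0 := by
  rw [largerRoot]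
  linear_combination (1 / 4 : ℝ) * Real.sq_sqrt h

section Spectrum

variable {α β : Type*} [Fintype α] [Fintype β] [DecidableEq α] [DecidableEq β]
  [Nonempty α] [Nonempty β]

theorem sq_sub_mul_add_nonpos_of_mem_spectrum {μ : ℝ}
    (hμ : μ ∈ spectrum ℝ
      (signlessLap ((⊤ : SimpleGraph α).graphJoin (⊥ : SimpleGraph β)))) :
    μ ^ 2 - (3 * Fintype.card α + Fintype.card β - 2) * μ +
      2 * Fintype.card α * (Fintype.card α - 1) ≤ 0 := by
  obtain ⟨v, hv0, hv⟩ := Matrix.mem_spectrum_iff_exists_mulVec_eq_smul.1 hμ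
  set s : ℝ := (Fintype.card α : ℝ)
  set t : ℝ := (Fintype.card β : ℝ)
  have hs : 1 ≤ s := Nat.one_le_cast.2 Fintype.card_pos
  have ht : 1 ≤ t := Nat.one_le_cast.2 Fintype.card_pos
  set A := ∑ a, v (.inl a)
  set B := ∑ b, v (.inr b)
  have hl (a : α) : (s + t - 2) * v (.inl a) + (A + B) = μ * v (.inl a) := by
    simpa [signlessLap_top_graphJoin_bot_mulVec_inl, Fintype.sum_sum_type]
      using congrFun hv (.inl a)
  have hr (b : β) : s * v (.inr b) + A = μ * v (.inr b) := by
    simpa [signlessLap_top_graphJoin_bot_mulVec_inr] using congrFun hv (.inr b)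
  have hA : μ * A = (s + t - 2) * A + s * (A + B) :=
    calc μ * A = ∑ a, ((s + t - 2) * v (.inl a) + (A + B)) := by
          simp only [A, Finset.mul_sum, hl]
      _ = _ := by simp [Finset.sum_add_distrib, ← Finset.mul_sum, A, s, mul_add]
  have hB : μ * B = s * B + t * A :=
    calc μ * B = ∑ b, (s * v (.inr b) + A) := by
          simp only [B, Finset.mul_sum, hr]
      _ = _ := by simp [Finset.sum_add_distrib, ← Finset.mul_sum, B, t]
  by_cases hA0 : A = 0
  · have hB0 : B = 0 := by
      rw [hA0] at hA
      exact (mul_eq_zero.1 (by linarith : s * B = 0)).resolve_left (by positivity)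
    obtain ⟨x | x, hx⟩ := Function.ne_iff.1 hv0
    · have hμ : μ = s + t - 2 :=
        mul_right_cancel₀ hx (by linarith [hl x] : μ * v (.inl x) = (s + t - 2) * v (.inl x))
      subst hμ
      nlinarith
    · have hμ : μ = s :=
        mul_right_cancel₀ hx (by linarith [hr x] : μ * v (.inr x) = s * v (.inr x))
      subst hμ
      nlinarith
  · have hpA : (μ ^ 2 - (3 * s + t - 2) * μ + 2 * s * (s - 1)) * A = 0 := by
      linear_combination (μ - s) * hA + s * hB
    exact ((mul_eq_zero.1 hpA).resolve_right hA0).le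

theorem mem_spectrum_of_sq_sub_mul_add_eq_zero {r : ℝ}
    (hr : r ^ 2 - (3 * Fintype.card α + Fintype.card β - 2) * r +
      2 * Fintype.card α * (Fintype.card α - 1) = 0) :
    r ∈ spectrum ℝ (signlessLap ((⊤ : SimpleGraph α).graphJoin (⊥ : SimpleGraph β))) := by
  set s : ℝ := (Fintype.card α : ℝ)
  have hs : 0 < s := Nat.cast_pos.2 Fintype.card_pos
  refine Matrix.mem_spectrum_iff_exists_mulVec_eq_smul.2 ⟨Sum.elim (fun _ => r - s) (fun _ => s),
    Function.ne_iff.2 ⟨.inr (Classical.arbitrary β), ?_⟩, ?_⟩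
  · simpa using hs.ne'
  · ext (a | b)
    · simp [signlessLap_top_graphJoin_bot_mulVec_inl, Fintype.sum_sum_type]
      linear_combination -hr
    · simp [signlessLap_top_graphJoin_bot_mulVec_inr]
      ring

theorem qRadius_top_graphJoin_bot :
    qRadius ((⊤ : SimpleGraph α).graphJoin (⊥ : SimpleGraph β)) =
      largerRoot (3 * Fintype.card α + Fintype.card β - 2)
        (2 * Fintype.card α * (Fintype.card α - 1)) := by
  have hs : (1 : ℝ) ≤ Fintype.card α := Nat.one_le_cast.2 Fintype.card_pos
  have ht : (1 : ℝ) ≤ Fintype.card β := Nat.one_le_cast.2 Fintype.card_pos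
  refine IsGreatest.csSup_eq ⟨mem_spectrum_of_sq_sub_mul_add_eq_zero (largerRoot_isRoot ?_),
    fun μ hμ => le_largerRoot_of_nonpos (sq_sub_mul_add_nonpos_of_mem_spectrum hμ)⟩
  nlinarith

end Spectrum

theorem qRadius_Ks_join_isolated_general (k s : ℕ) (hs : 1 ≤ s) :
    qRadius ((⊤ : SimpleGraph (Fin s)).graphJoin
        (⊥ : SimpleGraph (Fin ((k + 1) * s + 1)))) =
      (((k : ℝ) + 4) * s - 1 +
        Real.sqrt (((k : ℝ) ^ 2 + 8 * k + 8) * s ^ 2 - 2 * k * s + 1)) / 2 := by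
  have : Nonempty (Fin s) := ⟨⟨0, hs⟩⟩
  rw [qRadius_top_graphJoin_bot, largerRoot, Fintype.card_fin, Fintype.card_fin]
  push_cast
  congr 2
  · ring
  · congr 1
    ring

/-- The signless Laplacian spectral radius of `K_s ∨ ((k+1)s+1)K₁`. -/
theorem qRadius_Ks_join_isolated (k s : ℕ) (hk : 1 ≤ k) (hs : 1 ≤ s) :
    qRadius ((⊤ : SimpleGraph (Fin s)).graphJoin
        (⊥ : SimpleGraph (Fin ((k + 1) * s + 1)))) =
      (((k : ℝ) + 4) * s - 1 +
        Real.sqrt (((k : ℝ) ^ 2 + 8 * k + 8) * s ^ 2 - 2 * k * s + 1)) / 2 :=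
  qRadius_Ks_join_isolated_general k s hs
end
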